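/- Let Γ be a strongly connected oriented graph (every vertex reachable from every other by a directed path) with dim H_1(Γ,ℝ) ≥ 2. Then Γ contains either (a) two directed circuits meeting at exactly one common vertex, or (b) two distinct vertices u, w together with three paths between them, pairwise disjoint except at u and w, one directed from w to u and two directed from u to w. -/

import Mathlib

open scoped RealInnerProductSpace
open Classical

structure Digraph' (V E : Type) where
  s : E → V
  t : E → V

namespace Digraph'

variable {V E : Type} [Fintype V] [Fintype E] [DecidableEq V] [DecidableEq E]

/-- boundary map ∂ : C₁ → C₀, ∂e = source e − target e -/
noncomputable def bd (G : Digraph' V E) :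
    EuclideanSpace ℝ E →ₗ[ℝ] EuclideanSpace ℝ V :=
  Matrix.toEuclideanLin (Matrix.of fun v e =>
    (if G.s e = v then (1:ℝ) else 0) - (if G.t e = v then (1:ℝ) else 0))

/-- coboundary map δ : C₀ → C₁ -/
noncomputable def cobd (G : Digraph' V E) :
    EuclideanSpace ℝ V →ₗ[ℝ] EuclideanSpace ℝ E :=
  Matrix.toEuclideanLin (Matrix.of fun e v =>
    (if G.s e = v then (1:ℝ) else 0) - (if G.t e = v then (1:ℝ) else 0))

/-- orthogonal projection onto H₁(Γ,ℝ) = ker ∂, valued in the ambient space -/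
noncomputable def proj (G : Digraph' V E) (x : EuclideanSpace ℝ E) : EuclideanSpace ℝ E :=
  (Submodule.orthogonalProjectionOnto (LinearMap.ker (bd G)) x : EuclideanSpace ℝ E)

/-- reachability using only edges in S (edges traversable both ways) -/
def Reach (G : Digraph' V E) (S : Set E) : V → V → Prop :=
  Relation.ReflTransGen (fun a b => ∃ e ∈ S, (G.s e = a ∧ G.t e = b) ∨ (G.s e = b ∧ G.t e = a))

def Connected (G : Digraph' V E) : Prop := ∀ a b : V, Reach G Set.univ a b

/-- an edge is a bridge if its removal disconnects the graph -/
def IsBridge (G : Digraph' V E) (e : E) : Prop := ¬ ∀ a b : V, Reach G {e}ᶜ a b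

def Bridgeless (G : Digraph' V E) : Prop := ∀ e : E, ¬ IsBridge G e

/-- directed reachability -/
def DirReach (G : Digraph' V E) : V → V → Prop :=
  Relation.ReflTransGen (fun a b => ∃ e, G.s e = a ∧ G.t e = b)

def StronglyConnected (G : Digraph' V E) : Prop := ∀ a b : V, DirReach G a b

/-- a step of a walk: an edge with a direction of traversal (`true` = forward) -/
def stepSource (G : Digraph' V E) (st : E × Bool) : V := if st.2 then G.s st.1 else G.t st.1
def stepTarget (G : Digraph' V E) (st : E × Bool) : V := if st.2 then G.t st.1 else G.s st.1

/-- `IsWalk G u l v` : `l` is a walk from `u` to `v` -/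
def IsWalk (G : Digraph' V E) : V → List (E × Bool) → V → Prop
  | u, [], w => u = w
  | u, st :: rest, w => stepSource G st = u ∧ IsWalk G (stepTarget G st) rest w

/-- a path: a walk with all vertices distinct -/
def IsPath (G : Digraph' V E) (u : V) (l : List (E × Bool)) (v : V) : Prop :=
  IsWalk G u l v ∧ (u :: l.map (stepTarget G)).Nodup

/-- a circuit at u: a nonempty closed walk with distinct vertices and distinct edges -/
def IsCircuit (G : Digraph' V E) (u : V) (l : List (E × Bool)) : Prop :=
  l ≠ [] ∧ IsWalk G u l u ∧ (l.map (stepTarget G)).Nodup ∧ (l.map Prod.fst).Nodup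

/-- directed walk -/
def IsDirWalk (G : Digraph' V E) : V → List E → V → Prop
  | u, [], w => u = w
  | u, e :: rest, w => G.s e = u ∧ IsDirWalk G (G.t e) rest w

def IsDirPath (G : Digraph' V E) (u : V) (l : List E) (v : V) : Prop :=
  IsDirWalk G u l v ∧ (u :: l.map G.t).Nodup

/-- directed circuit at u -/
def IsDirCircuit (G : Digraph' V E) (u : V) (l : List E) : Prop :=
  l ≠ [] ∧ IsDirWalk G u l u ∧ (l.map G.t).Nodup ∧ l.Nodup

/-- signed edge-sum λ(w) ∈ C₁ of a walk -/
noncomputable def lam (_G : Digraph' V E) (l : List (E × Bool)) : EuclideanSpace ℝ E :=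
  (l.map fun st => (if st.2 then (1:ℝ) else -1) • EuclideanSpace.single st.1 (1:ℝ)).sum

/-- edge-sum λ(p) of a directed walk -/
noncomputable def dirlam (_G : Digraph' V E) (l : List E) : EuclideanSpace ℝ E :=
  (l.map fun e => EuclideanSpace.single e (1:ℝ)).sum

/-- a graph-theoretical cycle: an integral 1-cycle with coefficients in {0, ±1} -/
def IsCycle (G : Digraph' V E) (γ : EuclideanSpace ℝ E) : Prop :=
  bd G γ = 0 ∧ ∀ j, γ j = 0 ∨ γ j = 1 ∨ γ j = -1

/-- an elementary cycle -/
def Elementary (G : Digraph' V E) (γ : EuclideanSpace ℝ E) : Prop :=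
  IsCycle G γ ∧ γ ≠ 0 ∧
    ¬ ∃ γ₁ γ₂, IsCycle G γ₁ ∧ IsCycle G γ₂ ∧ γ₁ ≠ 0 ∧ γ₂ ≠ 0 ∧
      (∀ j, γ₁ j = 0 ∨ γ₂ j = 0) ∧ γ = γ₁ + γ₂

noncomputable def plusSet (_G : Digraph' V E) (γ : EuclideanSpace ℝ E) : Finset E :=
  Finset.univ.filter fun j => γ j = 1

noncomputable def minusSet (_G : Digraph' V E) (γ : EuclideanSpace ℝ E) : Finset E :=
  Finset.univ.filter fun j => γ j = -1

end Digraph'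

/-!
Strong connectivity closes any edge into a directed circuit `C`. If `C` used every edge, every
vertex would have exactly one incoming and one outgoing edge, so every 1-cycle would be constant
along `C` and `H₁` would be at most one-dimensional. Hence some edge `e ∉ C` starts on `C`, and a
directed path from its head to the first vertex `b` of `C` it reaches completes an ear from
`a = s e` to `b` meeting `C` only at its ends. If `a = b` the ear is a circuit meeting `C` only at
`a`; otherwise the two arcs of `C` between `a` and `b`, together with the ear, form a theta.
-/

namespace Digraph'

section Walks

variable {V E : Type} {G : Digraph' V E}

theorem IsDirWalk.append {a b c : V} {l m : List E} (h₁ : IsDirWalk G a l b)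
    (h₂ : IsDirWalk G b m c) : IsDirWalk G a (l ++ m) c := by
  induction l generalizing a with
  | nil => exact (show a = b from h₁) ▸ h₂
  | cons f l ih => exact ⟨h₁.1, ih h₁.2⟩

theorem IsDirWalk.exists_of_append {a c : V} {l m : List E} (h : IsDirWalk G a (l ++ m) c) :
    ∃ b, IsDirWalk G a l b ∧ IsDirWalk G b m c := by
  induction l generalizing a with
  | nil => exact ⟨a, rfl, h⟩
  | cons f l ih =>
    obtain ⟨b, h₁, h₂⟩ := ih h.2
    exact ⟨b, ⟨h.1, h₁⟩, h₂⟩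

theorem DirReach.exists_isDirWalk {a b : V} (h : DirReach G a b) : ∃ l, IsDirWalk G a l b := by
  induction h with
  | refl => exact ⟨[], rfl⟩
  | tail _ hstep ih =>
    obtain ⟨l, hl⟩ := ih
    obtain ⟨e, hs, ht⟩ := hstep
    exact ⟨l ++ [e], hl.append ⟨hs, ht⟩⟩

theorem DirReach.mem_of_forall_target_mem {S : Set V} (hS : ∀ e, G.s e ∈ S → G.t e ∈ S)
    {a b : V} (h : DirReach G a b) (ha : a ∈ S) : b ∈ S := by
  induction h with
  | refl => exact ha
  | tail _ hstep ih =>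
    obtain ⟨e, hs, ht⟩ := hstep
    exact ht ▸ hS e (hs ▸ ih)

theorem IsDirWalk.map_source {a b : V} {l : List E} (h : IsDirWalk G a l b) :
    l.map G.s = (a :: l.map G.t).dropLast := by
  induction l generalizing a with
  | nil => rfl
  | cons f l ih => rw [List.map_cons, List.map_cons, List.dropLast_cons_cons, h.1, ih h.2]

theorem IsDirWalk.source_mem {a b : V} {l : List E} (h : IsDirWalk G a l b) {e : E}
    (he : e ∈ l) : G.s e ∈ a :: l.map G.t :=
  (List.dropLast_sublist _).subset (h.map_source ▸ List.mem_map_of_mem he)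

theorem IsDirWalk.getLast_map_target {a b : V} {l : List E} (h : IsDirWalk G a l b)
    (hl : l ≠ []) : (l.map G.t).getLast (by simpa using hl) = b := by
  induction l generalizing a with
  | nil => contradiction
  | cons f l ih =>
    cases l with
    | nil => exact h.2
    | cons g l => simpa using ih h.2 (List.cons_ne_nil _ _)

theorem IsDirWalk.mem_map_target {a b : V} {l : List E} (h : IsDirWalk G a l b)
    (hl : l ≠ []) : b ∈ l.map G.t :=
  h.getLast_map_target hl ▸ List.getLast_mem _

theorem IsDirWalk.apply_eq_of_consecutive {α : Type*} {φ : E → α}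
    (hφ : ∀ f g, G.s g = G.t f → φ g = φ f) {f : E} {l : List E} {b : V}
    (h : IsDirWalk G (G.t f) l b) : ∀ g ∈ l, φ g = φ f := by
  induction l generalizing f with
  | nil => exact fun g hg => absurd hg List.not_mem_nil
  | cons g l ih =>
    intro g' hg'
    rcases List.mem_cons.1 hg' with rfl | hg'
    · exact hφ f g' h.1
    · exact (ih h.2 g' hg').trans (hφ f g h.1)

theorem IsDirWalk.exists_first_mem {S : Set V} {a c : V} {l : List E} (h : IsDirWalk G a l c)
    (hc : c ∈ S) : ∃ b ∈ S, ∃ m, IsDirWalk G a m b ∧ ∀ x ∈ a :: m.map G.t, x ∈ S → x = b := by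
  induction l generalizing a with
  | nil => exact ⟨a, (show a = c from h) ▸ hc, [], rfl, by simp⟩
  | cons f l ih =>
    by_cases ha : a ∈ S
    · exact ⟨a, ha, [], rfl, by simp⟩
    · obtain ⟨b, hb, m, hm, hmS⟩ := ih h.2
      refine ⟨b, hb, f :: m, ⟨h.1, hm⟩, fun x hx hxS => ?_⟩
      rcases List.mem_cons.1 hx with rfl | hx
      · exact absurd hxS ha
      · exact hmS x hx hxS

theorem IsDirPath.exists_suffix {a b v : V} {p : List E} (hp : IsDirPath G a p b)
    (hv : v ∈ a :: p.map G.t) : ∃ q, q <:+ p ∧ IsDirPath G v q b := by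
  induction p generalizing a with
  | nil =>
    obtain rfl : v = a := List.mem_singleton.1 hv
    exact ⟨[], List.suffix_refl _, hp⟩
  | cons f p ih =>
    rcases List.mem_cons.1 hv with rfl | hv
    · exact ⟨f :: p, List.suffix_refl _, hp⟩
    · obtain ⟨q, hq, hqp⟩ := ih ⟨hp.1.2, (List.nodup_cons.1 hp.2).2⟩ hv
      exact ⟨q, hq.trans (List.suffix_cons f p), hqp⟩

theorem IsDirWalk.exists_isDirPath {a b : V} {l : List E} (h : IsDirWalk G a l b) :
    ∃ p, p.Sublist l ∧ IsDirPath G a p b := by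
  induction l generalizing a with
  | nil => exact ⟨[], List.Sublist.refl _, h, List.nodup_singleton a⟩
  | cons f l ih =>
    obtain ⟨p, hpl, hp⟩ := ih h.2
    by_cases ha : a ∈ G.t f :: p.map G.t
    · obtain ⟨q, hqp, hq⟩ := hp.exists_suffix ha
      exact ⟨q, hqp.sublist.trans (hpl.trans (List.sublist_cons_self f l)), hq⟩
    · exact ⟨f :: p, hpl.cons_cons f, ⟨h.1, hp.1⟩, List.nodup_cons.2 ⟨ha, hp.2⟩⟩

theorem IsDirPath.source_ne_target {a b : V} {p : List E} (hp : IsDirPath G a p b) {e : E}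
    (he : e ∈ p) : G.s e ≠ G.t e := by
  induction p generalizing a with
  | nil => exact absurd he List.not_mem_nil
  | cons f p ih =>
    obtain ⟨⟨hs, hw⟩, hnd⟩ := hp
    rcases List.mem_cons.1 he with rfl | he
    · exact fun h => (List.nodup_cons.1 hnd).1 (hs ▸ h ▸ List.mem_cons_self)
    · exact ih ⟨hw, (List.nodup_cons.1 hnd).2⟩ he

end Walks

section Circuits

variable {V E : Type} {G : Digraph' V E}

theorem isDirCircuit_cons {e : E} {p : List E} (hp : IsDirPath G (G.t e) p (G.s e)) :
    IsDirCircuit G (G.s e) (e :: p) :=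
  ⟨List.cons_ne_nil _ _, ⟨rfl, hp.1⟩, hp.2,
    List.nodup_cons.2 ⟨fun he => (List.nodup_cons.1 hp.2).1 (List.mem_map_of_mem he),
      (List.nodup_cons.1 hp.2).2.of_map _⟩⟩

variable {u : V} {c : List E}

theorem IsDirCircuit.mem_map_target (hc : IsDirCircuit G u c) : u ∈ c.map G.t :=
  hc.2.1.mem_map_target hc.1

theorem IsDirCircuit.source_mem (hc : IsDirCircuit G u c) {e : E} (he : e ∈ c) :
    G.s e ∈ c.map G.t := by
  rcases List.mem_cons.1 (hc.2.1.source_mem he) with h | h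
  · exact h ▸ hc.mem_map_target
  · exact h

theorem IsDirCircuit.map_source_perm (hc : IsDirCircuit G u c) :
    (c.map G.s).Perm (c.map G.t) := by
  have hne : c.map G.t ≠ [] := by simpa using hc.1
  rw [hc.2.1.map_source, ← List.dropLast_append_getLast hne, hc.2.1.getLast_map_target hc.1,
    List.dropLast_cons_of_ne_nil (by simp), List.dropLast_concat]
  exact (List.perm_append_singleton _ _).symm

theorem IsDirCircuit.nodup_map_source (hc : IsDirCircuit G u c) : (c.map G.s).Nodup :=
  hc.map_source_perm.nodup_iff.2 hc.2.2.1

theorem IsDirCircuit.rotate {v : V} (hc : IsDirCircuit G u c) (hv : v ∈ c.map G.t) :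
    ∃ c', IsDirCircuit G v c' ∧ c'.Perm c := by
  obtain ⟨g, hg, rfl⟩ := List.mem_map.1 hv
  obtain ⟨x, y, rfl⟩ := List.append_of_mem hg
  obtain ⟨hne, hw, hvnd, hend⟩ := hc
  obtain ⟨m, hx, hgy⟩ := hw.exists_of_append
  have hperm : (y ++ (x ++ [g])).Perm (x ++ g :: y) := by
    simpa using List.perm_append_comm (l₁ := y) (l₂ := x ++ [g])
  exact ⟨y ++ (x ++ [g]), ⟨by simp, hgy.2.append (hx.append ⟨hgy.1, rfl⟩),
    (hperm.map G.t).nodup_iff.2 hvnd, hperm.nodup_iff.2 hend⟩, hperm⟩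

theorem IsDirCircuit.exists_split {w : V} (hc : IsDirCircuit G u c) (hw : w ∈ c.map G.t)
    (huw : u ≠ w) :
    ∃ r₁ r₂, c = r₁ ++ r₂ ∧ IsDirPath G u r₁ w ∧ IsDirPath G w r₂ u ∧
      ∀ v ∈ w :: r₂.map G.t, v ∈ u :: r₁.map G.t → v = u ∨ v = w := by
  obtain ⟨g, hg, rfl⟩ := List.mem_map.1 hw
  obtain ⟨x, y, rfl⟩ := List.append_of_mem hg
  obtain ⟨-, hwalk, hvnd, -⟩ := hc
  obtain ⟨m, hx, hsg, hy⟩ := hwalk.exists_of_append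
  have hy_ne : y ≠ [] := by
    rintro rfl
    exact huw (show G.t g = u from hy).symm
  rw [← List.singleton_append, ← List.append_assoc, List.map_append, List.nodup_append] at hvnd
  obtain ⟨hnd₁, hnd₂, hdisj⟩ := hvnd
  have hu : u ∈ y.map G.t := hy.mem_map_target hy_ne
  have hw : G.t g ∈ (x ++ [g]).map G.t := by simp
  refine ⟨x ++ [g], y, by simp,
    ⟨hx.append ⟨hsg, rfl⟩, List.nodup_cons.2 ⟨fun h => hdisj _ h _ hu rfl, hnd₁⟩⟩,
    ⟨hy, List.nodup_cons.2 ⟨fun h => hdisj _ hw _ h rfl, hnd₂⟩⟩, ?_⟩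
  intro v hv₂ hv₁
  rcases List.mem_cons.1 hv₂ with rfl | hv₂
  · exact Or.inr rfl
  rcases List.mem_cons.1 hv₁ with rfl | hv₁
  · exact Or.inl rfl
  exact absurd rfl (hdisj _ hv₁ _ hv₂)

end Circuits

section Homology

variable {V E : Type} [Fintype E] [DecidableEq V] [DecidableEq E] {G : Digraph' V E}

theorem bd_apply (G : Digraph' V E) (γ : EuclideanSpace ℝ E) (v : V) :
    bd G γ v = ∑ e with G.s e = v, γ e - ∑ e with G.t e = v, γ e := by
  simp [bd, Matrix.toEuclideanLin, Matrix.mulVec, dotProduct, sub_mul, Finset.sum_sub_distrib,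
    Finset.sum_filter]

theorem apply_eq_of_mem_ker_bd (hs : Function.Injective G.s) (ht : Function.Injective G.t)
    {γ : EuclideanSpace ℝ E} (hγ : γ ∈ LinearMap.ker (bd G)) {f g : E} (hfg : G.s g = G.t f) :
    γ g = γ f := by
  have hsg : ∀ e, G.s e = G.t f ↔ e = g := fun e => hfg ▸ hs.eq_iff
  have htf : ∀ e, G.t e = G.t f ↔ e = f := fun e => ht.eq_iff
  have h := bd_apply G γ (G.t f)
  simp only [LinearMap.mem_ker.1 hγ, WithLp.ofLp_zero, Pi.zero_apply, hsg, htf,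
    Finset.filter_eq', Finset.mem_univ, if_true, Finset.sum_singleton] at h
  exact sub_eq_zero.1 h.symm

theorem IsDirCircuit.finrank_ker_bd_le_one {u : V} {c : List E} (hc : IsDirCircuit G u c)
    (hall : ∀ e, e ∈ c) : Module.finrank ℝ (LinearMap.ker (bd G)) ≤ 1 := by
  have ht : Function.Injective G.t := fun _ _ =>
    List.inj_on_of_nodup_map hc.2.2.1 (hall _) (hall _)
  have hs : Function.Injective G.s := fun _ _ =>
    List.inj_on_of_nodup_map hc.nodup_map_source (hall _) (hall _)
  obtain ⟨e₀, l, rfl⟩ := List.exists_cons_of_ne_nil hc.1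
  have hker : LinearMap.ker (bd G) ≤ Submodule.span ℝ {WithLp.toLp 2 fun _ => (1 : ℝ)} := by
    intro γ hγ
    have hconst : ∀ e ∈ l, γ e = γ e₀ :=
      hc.2.1.2.apply_eq_of_consecutive fun _ _ => apply_eq_of_mem_ker_bd hs ht hγ
    refine Submodule.mem_span_singleton.2 ⟨γ e₀, ?_⟩
    ext e
    rcases List.mem_cons.1 (hall e) with rfl | he
    · simp
    · simp [hconst e he]
  calc Module.finrank ℝ (LinearMap.ker (bd G))
      ≤ Module.finrank ℝ (Submodule.span ℝ {WithLp.toLp 2 fun _ => (1 : ℝ)}) :=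
        Submodule.finrank_mono hker
    _ ≤ 1 := by simpa using finrank_span_le_card ({WithLp.toLp 2 fun _ => (1 : ℝ)} : Set _)

end Homology

section StronglyConnected

variable {V E : Type} {G : Digraph' V E}

theorem exists_isDirCircuit (hsc : StronglyConnected G) (e : E) :
    ∃ c, IsDirCircuit G (G.s e) c := by
  obtain ⟨l, hl⟩ := (hsc (G.t e) (G.s e)).exists_isDirWalk
  obtain ⟨p, -, hp⟩ := hl.exists_isDirPath
  exact ⟨e :: p, isDirCircuit_cons hp⟩

theorem IsDirCircuit.exists_notMem_source_mem [Fintype E] [DecidableEq V] [DecidableEq E]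
    (hsc : StronglyConnected G) (hdim : 2 ≤ Module.finrank ℝ (LinearMap.ker (bd G)))
    {u : V} {c : List E} (hc : IsDirCircuit G u c) : ∃ e ∉ c, G.s e ∈ c.map G.t := by
  by_contra! h
  have hclosed : ∀ e, G.s e ∈ c.map G.t → e ∈ c := fun e he => not_not.1 fun hn => h e hn he
  have hall_verts : ∀ v, v ∈ c.map G.t := fun v =>
    (hsc u v).mem_of_forall_target_mem (S := {v | v ∈ c.map G.t})
      (fun e he => List.mem_map_of_mem (hclosed e he)) hc.mem_map_target
  have := hc.finrank_ker_bd_le_one fun e => hclosed e (hall_verts _)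
  omega

theorem IsDirCircuit.exists_ear (hsc : StronglyConnected G) {u : V} {c : List E}
    (hc : IsDirCircuit G u c) {e : E} (he : e ∉ c) :
    ∃ b ∈ c.map G.t, ∃ p, IsDirPath G (G.t e) p b ∧
      (∀ x ∈ G.t e :: p.map G.t, x ∈ c.map G.t → x = b) ∧ ∀ f ∈ e :: p, f ∉ c := by
  obtain ⟨l, hl⟩ := (hsc (G.t e) u).exists_isDirWalk
  obtain ⟨b, hb, m, hm, hmS⟩ :=
    hl.exists_first_mem (S := {x | x ∈ c.map G.t}) hc.mem_map_target
  obtain ⟨p, hpm, hp⟩ := hm.exists_isDirPath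
  have hpS : ∀ x ∈ G.t e :: p.map G.t, x ∈ c.map G.t → x = b := fun x hx =>
    hmS x (((hpm.map G.t).cons_cons _).subset hx)
  refine ⟨b, hb, p, hp, hpS, fun f hf hfc => ?_⟩
  rcases List.mem_cons.1 hf with rfl | hf
  · exact he hfc
  · have hs := hpS _ (hp.1.source_mem hf) (hc.source_mem hfc)
    have ht := hpS _ (List.mem_cons_of_mem _ (List.mem_map_of_mem hf)) (List.mem_map_of_mem hfc)
    exact hp.source_ne_target hf (hs.trans ht.symm)

end StronglyConnected

section Conclusion

variable {V E : Type}

def HasDirFigureEight (G : Digraph' V E) : Prop :=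
  ∃ (v₀ : V) (l₁ l₂ : List E),
    IsDirCircuit G v₀ l₁ ∧ IsDirCircuit G v₀ l₂ ∧
    (∀ v : V, v ∈ l₁.map G.t → v ∈ l₂.map G.t → v = v₀) ∧
    (∀ e : E, e ∈ l₁ → e ∉ l₂)

def HasDirTheta (G : Digraph' V E) : Prop :=
  ∃ (u w : V) (p₁ p₂ p₃ : List E), u ≠ w ∧
    IsDirWalk G w p₁ u ∧ (w :: p₁.map G.t).Nodup ∧
    IsDirWalk G u p₂ w ∧ (u :: p₂.map G.t).Nodup ∧
    IsDirWalk G u p₃ w ∧ (u :: p₃.map G.t).Nodup ∧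
    (∀ v : V, v ∈ w :: p₁.map G.t → v ∈ u :: p₂.map G.t → v = u ∨ v = w) ∧
    (∀ v : V, v ∈ w :: p₁.map G.t → v ∈ u :: p₃.map G.t → v = u ∨ v = w) ∧
    (∀ v : V, v ∈ u :: p₂.map G.t → v ∈ u :: p₃.map G.t → v = u ∨ v = w) ∧
    (∀ e : E, e ∈ p₁ → e ∉ p₂) ∧ (∀ e : E, e ∈ p₁ → e ∉ p₃) ∧
    (∀ e : E, e ∈ p₂ → e ∉ p₃)

variable {G : Digraph' V E} {u : V} {c p : List E} {e : E}

theorem IsDirCircuit.hasDirFigureEight (hc : IsDirCircuit G u c) (hs : G.s e ∈ c.map G.t)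
    (hp : IsDirPath G (G.t e) p (G.s e))
    (hpc : ∀ x ∈ G.t e :: p.map G.t, x ∈ c.map G.t → x = G.s e) (hpe : ∀ f ∈ e :: p, f ∉ c) :
    HasDirFigureEight G := by
  obtain ⟨c', hc', hperm⟩ := hc.rotate hs
  exact ⟨G.s e, e :: p, c', isDirCircuit_cons hp, hc',
    fun v hv hv' => hpc v hv ((hperm.map G.t).mem_iff.1 hv'),
    fun f hf hf' => hpe f hf (hperm.mem_iff.1 hf')⟩

theorem IsDirCircuit.hasDirTheta {b : V} (hc : IsDirCircuit G u c) (hs : G.s e ∈ c.map G.t)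
    (hb : b ∈ c.map G.t) (hsb : G.s e ≠ b) (hp : IsDirPath G (G.t e) p b)
    (hpc : ∀ x ∈ G.t e :: p.map G.t, x ∈ c.map G.t → x = b) (hpe : ∀ f ∈ e :: p, f ∉ c) :
    HasDirTheta G := by
  obtain ⟨c', hc', hperm⟩ := hc.rotate hs
  obtain ⟨r₁, r₂, rfl, hr₁, hr₂, hr⟩ := hc'.exists_split ((hperm.map G.t).mem_iff.2 hb) hsb
  have hrc : ∀ v ∈ (r₁ ++ r₂).map G.t, v ∈ c.map G.t := fun v => (hperm.map G.t).mem_iff.1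
  have hr₁c : ∀ v ∈ G.s e :: r₁.map G.t, v ∈ c.map G.t := by
    intro v hv
    rcases List.mem_cons.1 hv with rfl | hv
    · exact hs
    · exact hrc v (List.map_append ▸ List.mem_append_left _ hv)
  have hr₂c : ∀ v ∈ b :: r₂.map G.t, v ∈ c.map G.t := by
    intro v hv
    rcases List.mem_cons.1 hv with rfl | hv
    · exact hb
    · exact hrc v (List.map_append ▸ List.mem_append_right _ hv)
  have hpc' : ∀ v ∈ G.s e :: (e :: p).map G.t, v ∈ c.map G.t → v = G.s e ∨ v = b := by
    intro v hv hvc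
    rcases List.mem_cons.1 hv with rfl | hv
    · exact Or.inl rfl
    · exact Or.inr (hpc v hv hvc)
  have hre : ∀ f ∈ r₁ ++ r₂, f ∉ e :: p := fun f hf hf' => hpe f hf' (hperm.mem_iff.1 hf)
  refine ⟨G.s e, b, r₂, r₁, e :: p, hsb, hr₂.1, hr₂.2, hr₁.1, hr₁.2, ⟨rfl, hp.1⟩,
    List.nodup_cons.2 ⟨fun h => hsb (hpc _ h hs), hp.2⟩, hr,
    fun v hv₂ hv => hpc' v hv (hr₂c v hv₂), fun v hv₁ hv => hpc' v hv (hr₁c v hv₁),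
    fun f hf₂ hf₁ => ?_, fun f hf => hre f (List.mem_append_right _ hf),
    fun f hf => hre f (List.mem_append_left _ hf)⟩
  exact (List.nodup_append.1 hc'.2.2.2).2.2 f hf₁ f hf₂ rfl

end Conclusion

end Digraph'

open Digraph' in
theorem stmt13_general {V E : Type} [Fintype E] [DecidableEq V] [DecidableEq E]
    (G : Digraph' V E) (hsc : StronglyConnected G)
    (hdim : 2 ≤ Module.finrank ℝ (LinearMap.ker (bd G))) :
    (∃ (v₀ : V) (l₁ l₂ : List E),
        IsDirCircuit G v₀ l₁ ∧ IsDirCircuit G v₀ l₂ ∧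
        (∀ v : V, v ∈ l₁.map G.t → v ∈ l₂.map G.t → v = v₀) ∧
        (∀ e : E, e ∈ l₁ → e ∉ l₂)) ∨
    (∃ (u w : V) (p₁ p₂ p₃ : List E), u ≠ w ∧
        IsDirWalk G w p₁ u ∧ (w :: p₁.map G.t).Nodup ∧
        IsDirWalk G u p₂ w ∧ (u :: p₂.map G.t).Nodup ∧
        IsDirWalk G u p₃ w ∧ (u :: p₃.map G.t).Nodup ∧
        (∀ v : V, v ∈ w :: p₁.map G.t → v ∈ u :: p₂.map G.t → v = u ∨ v = w) ∧
        (∀ v : V, v ∈ w :: p₁.map G.t → v ∈ u :: p₃.map G.t → v = u ∨ v = w) ∧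
        (∀ v : V, v ∈ u :: p₂.map G.t → v ∈ u :: p₃.map G.t → v = u ∨ v = w) ∧
        (∀ e : E, e ∈ p₁ → e ∉ p₂) ∧ (∀ e : E, e ∈ p₁ → e ∉ p₃) ∧
        (∀ e : E, e ∈ p₂ → e ∉ p₃)) := by
  obtain ⟨e₀⟩ : Nonempty E := Fintype.card_pos_iff.1 <| by
    have := (Submodule.finrank_le (LinearMap.ker (bd G))).trans_eq finrank_euclideanSpace
    omega
  obtain ⟨c, hc⟩ := exists_isDirCircuit hsc e₀
  obtain ⟨e, he, hs⟩ := hc.exists_notMem_source_mem hsc hdim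
  obtain ⟨b, hb, p, hp, hpc, hpe⟩ := hc.exists_ear hsc he
  by_cases hsb : G.s e = b
  · subst hsb
    exact Or.inl (hc.hasDirFigureEight hs hp hpc hpe)
  · exact Or.inr (hc.hasDirTheta hs hb hsb hp hpc hpe)

open Digraph' in
theorem stmt13 {V E : Type} [Fintype V] [Fintype E] [DecidableEq V] [DecidableEq E]
    (G : Digraph' V E) (hsc : StronglyConnected G)
    (hdim : 2 ≤ Module.finrank ℝ (LinearMap.ker (bd G))) :
    (∃ (v₀ : V) (l₁ l₂ : List E),
        IsDirCircuit G v₀ l₁ ∧ IsDirCircuit G v₀ l₂ ∧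
        (∀ v : V, v ∈ l₁.map G.t → v ∈ l₂.map G.t → v = v₀) ∧
        (∀ e : E, e ∈ l₁ → e ∉ l₂)) ∨
    (∃ (u w : V) (p₁ p₂ p₃ : List E), u ≠ w ∧
        IsDirWalk G w p₁ u ∧ (w :: p₁.map G.t).Nodup ∧
        IsDirWalk G u p₂ w ∧ (u :: p₂.map G.t).Nodup ∧
        IsDirWalk G u p₃ w ∧ (u :: p₃.map G.t).Nodup ∧
        (∀ v : V, v ∈ w :: p₁.map G.t → v ∈ u :: p₂.map G.t → v = u ∨ v = w) ∧
        (∀ v : V, v ∈ w :: p₁.map G.t → v ∈ u :: p₃.map G.t → v = u ∨ v = w) ∧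
        (∀ v : V, v ∈ u :: p₂.map G.t → v ∈ u :: p₃.map G.t → v = u ∨ v = w) ∧
        (∀ e : E, e ∈ p₁ → e ∉ p₂) ∧ (∀ e : E, e ∈ p₁ → e ∉ p₃) ∧
        (∀ e : E, e ∈ p₂ → e ∉ p₃)) :=
  stmt13_general G hsc hdim
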